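/- Let d ≥ 1 and let W : ℝ^d → ℝ ∪ {+∞} satisfy Hypotheses (H1)–(H6). Then there exists K > 0, depending only on W and the dimension d, such that for every R ≥ 0 and every global minimiser ρ_R of the interaction energy E on P_R(ℝ^d), the diameter of the support of ρ_R is at most K. -/

import Mathlib

/-!
With `g = W - W_min ≥ 0`, the energy of a probability measure is `(J(ρ) + W_min) / 2` where
`J(ρ) = ∬ g(x - y) dρ dρ`, so minimisers of `E` on `P_R` are minimisers of `J`. Instability gives
a level `c` with `J(ρ₀) < c` while `g ≥ c` outside some ball `B(0, A)`; truncating `ρ₀` yields a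
competitor supported in a fixed ball, so for all large `R` a minimiser `ρ` has `J(ρ) ≤ J₁ < c`.

The Euler–Lagrange inequality gives `g * ρ ≤ J(ρ)` `ρ`-a.e., hence every support point carries
mass at least `1 - J₁ / c > 0` within distance `A` of it, and only boundedly many support points
can be mutually `2A` apart. Along a coordinate axis the support can therefore meet only boundedly
many disjoint windows of a fixed width, and it cannot skip a window of width `≥ R₆ + 1` either:
moving the part beyond the window one unit towards the other part keeps it in the ball and, by
(H6), strictly lowers every interaction across the window.
-/

open MeasureTheory Filter Metric
open scoped ENNReal

/-- `ℝ^d` with the Euclidean structure. -/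
abbrev Ed (d : ℕ) : Type := EuclideanSpace ℝ (Fin d)

/-- The positive part of an extended real number, as an element of `ℝ≥0∞`. -/
noncomputable def EReal.posPart (x : EReal) : ℝ≥0∞ := (x ⊔ 0).abs

/-- The integral of an `EReal`-valued function, defined as the difference (in `EReal`)
of the lower integrals of the positive and the negative parts. -/
noncomputable def eInt {α : Type*} [MeasurableSpace α] (μ : Measure α) (f : α → EReal) :
    EReal :=
  ((∫⁻ x, (f x).posPart ∂μ : ℝ≥0∞) : EReal) - ((∫⁻ x, (-f x).posPart ∂μ : ℝ≥0∞) : EReal)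

/-- The interaction energy `E(ρ) = (1/2) ∬ W(x-y) dρ(x) dρ(y)`, with values in `EReal`. -/
noncomputable def energy {d : ℕ} (W : Ed d → EReal) (ρ : Measure (Ed d)) : EReal :=
  ((1 / 2 : ℝ) : EReal) * eInt (ρ.prod ρ) (fun p => W (p.1 - p.2))

/-- The support of a measure: the set of points all of whose open neighbourhoods have
positive measure. -/
def msupport {α : Type*} [TopologicalSpace α] [MeasurableSpace α] (μ : Measure α) : Set α :=
  {x | ∀ U : Set α, IsOpen U → x ∈ U → 0 < μ U}

/-- `ρ ∈ P_R(ℝ^d)`: the support of `ρ` is contained in the closed ball `B̄(0,R)`. -/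
def InBall {d : ℕ} (ρ : Measure (Ed d)) (R : ℝ) : Prop :=
  msupport ρ ⊆ Metric.closedBall (0 : Ed d) R

/-- `ρ` is a global minimiser of the interaction energy on `P(ℝ^d)`. -/
def IsMinimiser {d : ℕ} (W : Ed d → EReal) (ρ : Measure (Ed d)) : Prop :=
  IsProbabilityMeasure ρ ∧
    ∀ μ : Measure (Ed d), IsProbabilityMeasure μ → energy W ρ ≤ energy W μ

/-- `ρ` is a global minimiser of the interaction energy on `P_R(ℝ^d)`. -/
def IsMinimiserOn {d : ℕ} (W : Ed d → EReal) (ρ : Measure (Ed d)) (R : ℝ) : Prop :=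
  IsProbabilityMeasure ρ ∧ InBall ρ R ∧
    ∀ μ : Measure (Ed d), IsProbabilityMeasure μ → InBall μ R → energy W ρ ≤ energy W μ


open ProbabilityTheory Set
open scoped NNReal Topology

lemma msupport_eq_support {α : Type*} [TopologicalSpace α] [MeasurableSpace α]
    (μ : Measure α) : msupport μ = μ.support := by
  rw [Measure.support_eq_forall_isOpen]
  ext x
  exact ⟨fun h U hx hU => h U hU hx, fun h U hU hx => h U hx hU⟩

lemma MeasureTheory.Measure.support_map_homeomorph_subset {X Y : Type*} [TopologicalSpace X]
    [MeasurableSpace X] [BorelSpace X] [TopologicalSpace Y] [MeasurableSpace Y] [BorelSpace Y]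
    (μ : Measure X) (h : X ≃ₜ Y) : (μ.map h).support ⊆ h '' μ.support := by
  intro y hy
  refine ⟨h.symm y, (Measure.mem_support_iff_forall _).2 fun U hU => ?_, h.apply_symm_apply y⟩
  have hV : h.symm ⁻¹' U ∈ 𝓝 y := h.symm.continuous.continuousAt hU
  simpa [h.measurableEmbedding.map_apply, Set.preimage_preimage] using
    (Measure.mem_support_iff_forall y).1 hy _ hV

section Interaction

variable {E : Type*} [AddCommGroup E] [MeasurableSpace E] {g : E → ℝ≥0∞}

/-- The paper's `W * μ`, with a nonnegative kernel `g` in place of `W`. -/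
noncomputable def potential (g : E → ℝ≥0∞) (μ : Measure E) (x : E) : ℝ≥0∞ :=
  ∫⁻ y, g (x - y) ∂μ

noncomputable def interaction (g : E → ℝ≥0∞) (μ : Measure E) : ℝ≥0∞ :=
  ∫⁻ x, potential g μ x ∂μ

lemma potential_add_measure (μ ν : Measure E) :
    potential g (μ + ν) = potential g μ + potential g ν :=
  funext fun _ => lintegral_add_measure _ _ _

lemma potential_smul_measure (c : ℝ≥0∞) (μ : Measure E) :
    potential g (c • μ) = c • potential g μ :=
  funext fun _ => lintegral_smul_measure _ _

lemma interaction_mono {μ ν : Measure E} (h : μ ≤ ν) : interaction g μ ≤ interaction g ν :=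
  lintegral_mono' h fun _ => lintegral_mono' h le_rfl

variable [MeasurableSub₂ E]

lemma Measurable.comp_fst_sub_snd (hg : Measurable g) : Measurable fun p : E × E => g (p.1 - p.2) :=
  hg.comp (measurable_fst.sub measurable_snd)

lemma measurable_potential (hg : Measurable g) (μ : Measure E) [SFinite μ] :
    Measurable (potential g μ) :=
  hg.comp_fst_sub_snd.lintegral_prod_right'

lemma lintegral_potential_comm (hg : Measurable g) (hsym : ∀ z, g (-z) = g z)
    (μ ν : Measure E) [SFinite μ] [SFinite ν] :
    ∫⁻ x, potential g ν x ∂μ = ∫⁻ x, potential g μ x ∂ν := by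
  unfold potential
  rw [lintegral_lintegral_swap (f := fun x y => g (x - y)) hg.comp_fst_sub_snd.aemeasurable]
  refine lintegral_congr fun y => lintegral_congr fun x => ?_
  rw [← hsym, neg_sub]

lemma interaction_add (hg : Measurable g) (hsym : ∀ z, g (-z) = g z)
    (μ ν : Measure E) [SFinite μ] [SFinite ν] :
    interaction g (μ + ν) =
      interaction g μ + 2 * ∫⁻ x, potential g μ x ∂ν + interaction g ν := by
  simp only [interaction, potential_add_measure, lintegral_add_measure, Pi.add_apply,
    lintegral_add_left (measurable_potential hg _), lintegral_potential_comm hg hsym μ ν]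
  ring

lemma interaction_smul (hg : Measurable g) (c : ℝ≥0∞) (μ : Measure E) [SFinite μ] :
    interaction g (c • μ) = c ^ 2 * interaction g μ := by
  simp only [interaction, potential_smul_measure, lintegral_smul_measure, Pi.smul_apply,
    smul_eq_mul, lintegral_const_mul _ (measurable_potential hg μ)]
  ring

lemma interaction_map_sub_const (hg : Measurable g) (μ : Measure E) [SFinite μ] (e : E) :
    interaction g (μ.map (· - e)) = interaction g μ := by
  unfold interaction
  rw [lintegral_map (measurable_potential hg _) (measurable_sub_const e)]
  refine lintegral_congr fun x => ?_
  rw [potential, lintegral_map (f := fun y => g (x - e - y))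
    (hg.comp (measurable_const.sub measurable_id)) (measurable_sub_const e)]
  simp only [sub_sub_sub_cancel_right, potential]

/-- The self-interaction of the translated part is unchanged, so only the cross term moves. -/
theorem interaction_restrict_add_map_sub_lt (hg : Measurable g) (hsym : ∀ z, g (-z) = g z)
    {ρ : Measure E} [IsFiniteMeasure ρ] {S₁ S₂ : Set E} (hS₁ : MeasurableSet S₁)
    (hS₂ : MeasurableSet S₂) (hdisj : Disjoint S₁ S₂) (hcover : ρ (S₁ ∪ S₂)ᶜ = 0)
    (h₁ : ρ S₁ ≠ 0) (h₂ : ρ S₂ ≠ 0) (hJ : interaction g ρ ≠ ⊤) {e : E}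
    (hdec : ∀ x ∈ S₂, ∀ y ∈ S₁, g (x - e - y) < g (x - y)) :
    interaction g (ρ.restrict S₁ + (ρ.restrict S₂).map (· - e)) < interaction g ρ := by
  set ρ₁ := ρ.restrict S₁
  set ρ₂ := ρ.restrict S₂
  have hsplit : interaction g ρ =
      interaction g ρ₁ + 2 * ∫⁻ x, potential g ρ₁ x ∂ρ₂ + interaction g ρ₂ := by
    have hae_cover : ∀ᵐ x ∂ρ, x ∈ S₁ ∪ S₂ := mem_ae_iff.2 hcover
    rw [← interaction_add hg hsym, ← Measure.restrict_union hdisj hS₂,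
      Measure.restrict_eq_self_of_ae_mem hae_cover]
  have hfin := hsplit ▸ hJ
  simp only [ne_eq, ENNReal.add_eq_top, not_or] at hfin
  have hae : ∀ᵐ p ∂ρ₂.prod ρ₁, g (p.1 - e - p.2) < g (p.1 - p.2) := by
    rw [Measure.prod_restrict]
    filter_upwards [ae_restrict_mem (hS₂.prod hS₁)] with p hp using hdec _ hp.1 _ hp.2
  have hne : ρ₂.prod ρ₁ ≠ 0 := by
    rw [← Measure.measure_univ_ne_zero, ← univ_prod_univ, Measure.prod_prod]
    simp [ρ₁, ρ₂, h₁, h₂]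
  have hcross : ∫⁻ x, potential g ρ₁ x ∂ρ₂.map (· - e) < ∫⁻ x, potential g ρ₁ x ∂ρ₂ := by
    have hcross_fin : ∫⁻ x, potential g ρ₁ x ∂ρ₂ ≠ ⊤ := fun h => hfin.1.2 (by simp [h])
    rw [lintegral_map (measurable_potential hg _) (measurable_sub_const e)]
    simp only [potential] at hcross_fin ⊢
    rw [← lintegral_prod _ hg.comp_fst_sub_snd.aemeasurable] at hcross_fin ⊢
    rw [← lintegral_prod (fun p : E × E => g (p.1 - e - p.2))
      (hg.comp ((measurable_fst.sub_const e).sub measurable_snd)).aemeasurable]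
    exact lintegral_strict_mono hne hg.comp_fst_sub_snd.aemeasurable
      (ne_top_of_le_ne_top hcross_fin (lintegral_mono_ae (hae.mono fun _ h => h.le))) hae
  rw [interaction_add hg hsym, interaction_map_sub_const hg, hsplit]
  exact ENNReal.add_lt_add_right hfin.2 (ENNReal.add_lt_add_left hfin.1.1
    (ENNReal.mul_lt_mul_right two_ne_zero ENNReal.ofNat_ne_top hcross))

end Interaction

lemma le_of_forall_le_quadratic_mix {j x q : ℝ}
    (h : ∀ t : ℝ, 0 < t → t < 1 → j ≤ (1 - t) ^ 2 * j + 2 * (t * ((1 - t) * x)) + t ^ 2 * q) :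
    j ≤ x := by
  have key : ∀ t : ℝ, 0 < t → t < 1 → 2 * (j - x) ≤ t * (j - 2 * x + q) := by
    intro t ht₀ ht₁
    refine le_of_mul_le_mul_left ?_ ht₀
    linarith [h t ht₀ ht₁]
  have hlim : Tendsto (fun t : ℝ => t * (j - 2 * x + q)) (𝓝[>] 0) (𝓝 0) := by
    simpa using ((continuous_mul_const (j - 2 * x + q)).tendsto 0).mono_left nhdsWithin_le_nhds
  have : 2 * (j - x) ≤ 0 := ge_of_tendsto hlim <| by
    filter_upwards [Ioo_mem_nhdsGT one_pos] with t ht using key t ht.1 ht.2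
  linarith

section Minimiser

variable {E : Type*} [AddCommGroup E] [TopologicalSpace E] [MeasurableSpace E]
  {g : E → ℝ≥0∞} {F : Set E} {ρ : Measure E}

def IsInteractionMinimiserOn (g : E → ℝ≥0∞) (F : Set E) (ρ : Measure E) : Prop :=
  IsProbabilityMeasure ρ ∧ ρ.support ⊆ F ∧
    ∀ μ : Measure E, IsProbabilityMeasure μ → μ.support ⊆ F → interaction g ρ ≤ interaction g μ

variable [MeasurableSub₂ E]

/-- The Euler–Lagrange inequality, from the minimality of `ρ` against `(1 - t) ρ + t σ`. -/
theorem IsInteractionMinimiserOn.interaction_le_lintegral_potential (hg : Measurable g)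
    (hsym : ∀ z, g (-z) = g z) (hρ : IsInteractionMinimiserOn g F ρ)
    (hJ : interaction g ρ ≠ ⊤) {σ : Measure E} [IsProbabilityMeasure σ] (hσF : σ.support ⊆ F)
    (hσJ : interaction g σ ≠ ⊤) : interaction g ρ ≤ ∫⁻ x, potential g ρ x ∂σ := by
  obtain ⟨_, hρF, hmin⟩ := hρ
  by_cases hX : ∫⁻ x, potential g ρ x ∂σ = ⊤
  · simp [hX]
  have hmix : ∀ s t : ℝ≥0, s + t = 1 → interaction g ρ ≤
      s ^ 2 * interaction g ρ + 2 * (t * (s * ∫⁻ x, potential g ρ x ∂σ)) +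
        t ^ 2 * interaction g σ := by
    intro s t hst
    have hprob : IsProbabilityMeasure ((s : ℝ≥0∞) • ρ + (t : ℝ≥0∞) • σ) :=
      ⟨by simp [← ENNReal.coe_add, hst]⟩
    have hsupp : ((s : ℝ≥0∞) • ρ + (t : ℝ≥0∞) • σ).support ⊆ F := by
      rw [Measure.support_add]
      exact union_subset (Measure.smul_absolutelyContinuous.support_mono.trans hρF)
        (Measure.smul_absolutelyContinuous.support_mono.trans hσF)
    have := hmin _ hprob hsupp
    rw [interaction_add hg hsym, interaction_smul hg, interaction_smul hg,
      potential_smul_measure, lintegral_smul_measure, smul_eq_mul, Pi.smul_def] at this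
    simpa only [smul_eq_mul, lintegral_const_mul' _ _ ENNReal.coe_ne_top] using this
  obtain ⟨j, hj⟩ : ∃ j : ℝ≥0, (j : ℝ≥0∞) = interaction g ρ := ⟨_, ENNReal.coe_toNNReal hJ⟩
  obtain ⟨c, hc⟩ : ∃ c : ℝ≥0, (c : ℝ≥0∞) = ∫⁻ x, potential g ρ x ∂σ :=
    ⟨_, ENNReal.coe_toNNReal hX⟩
  obtain ⟨q, hq⟩ : ∃ q : ℝ≥0, (q : ℝ≥0∞) = interaction g σ := ⟨_, ENNReal.coe_toNNReal hσJ⟩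
  rw [← hj, ← hc, ← hq] at hmix
  rw [← hj, ← hc, ENNReal.coe_le_coe, ← NNReal.coe_le_coe]
  refine le_of_forall_le_quadratic_mix (q := q) fun t ht₀ ht₁ => ?_
  have h := hmix (1 - t).toNNReal t.toNNReal
    (by rw [← Real.toNNReal_add (by linarith) ht₀.le, sub_add_cancel, Real.toNNReal_one])
  norm_cast at h
  simpa [Real.coe_toNNReal _ ht₀.le, Real.coe_toNNReal _ (sub_nonneg.2 ht₁.le)] using
    NNReal.coe_le_coe.2 h

theorem IsInteractionMinimiserOn.measure_mul_le_setLIntegral_potential [OpensMeasurableSpace E]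
    (hg : Measurable g) (hsym : ∀ z, g (-z) = g z) (hρ : IsInteractionMinimiserOn g F ρ)
    (hJ : interaction g ρ ≠ ⊤) (T : Set E) :
    ρ T * interaction g ρ ≤ ∫⁻ x in T, potential g ρ x ∂ρ := by
  have := hρ.1
  rcases eq_or_ne (ρ T) 0 with h0 | h0
  · simp [h0]
  have := cond_isProbabilityMeasure (μ := ρ) h0
  have hJT : interaction g ρ[|T] ≠ ⊤ := by
    rw [ProbabilityTheory.cond, interaction_smul hg]
    exact ENNReal.mul_ne_top (by simp [h0])
      (ne_top_of_le_ne_top hJ (interaction_mono Measure.restrict_le_self))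
  have h := hρ.interaction_le_lintegral_potential hg hsym hJ
    (cond_absolutelyContinuous.support_mono.trans hρ.2.1) hJT
  rw [ProbabilityTheory.cond, lintegral_smul_measure, smul_eq_mul] at h
  calc ρ T * interaction g ρ ≤ ρ T * ((ρ T)⁻¹ * ∫⁻ x in T, potential g ρ x ∂ρ) := by gcongr
    _ = ∫⁻ x in T, potential g ρ x ∂ρ := by
      rw [← mul_assoc, ENNReal.mul_inv_cancel h0 (measure_ne_top ρ T), one_mul]

theorem IsInteractionMinimiserOn.ae_potential_le [OpensMeasurableSpace E]
    (hg : Measurable g) (hsym : ∀ z, g (-z) = g z) (hρ : IsInteractionMinimiserOn g F ρ)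
    (hJ : interaction g ρ ≠ ⊤) : ∀ᵐ x ∂ρ, potential g ρ x ≤ interaction g ρ := by
  have := hρ.1
  set J := interaction g ρ
  set S := {x | J < potential g ρ x}
  have hS : MeasurableSet S := measurableSet_lt measurable_const (measurable_potential hg ρ)
  refine ae_iff.2 ?_
  simp_rw [not_le]
  by_contra hpos
  have hout := hρ.measure_mul_le_setLIntegral_potential hg hsym hJ Sᶜ
  have hin : ρ S * J < ∫⁻ x in S, potential g ρ x ∂ρ := by
    rw [mul_comm, ← setLIntegral_const]
    exact setLIntegral_strict_mono hS hpos (measurable_potential hg ρ)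
      (by simp [ENNReal.mul_eq_top, hJ]) (ae_of_all _ fun _ hx => hx)
  have : J < J := calc
    J = ρ Sᶜ * J + ρ S * J := by rw [← add_mul, add_comm, measure_add_measure_compl hS,
      measure_univ, one_mul]
    _ < ∫⁻ x in Sᶜ, potential g ρ x ∂ρ + ∫⁻ x in S, potential g ρ x ∂ρ :=
      ENNReal.add_lt_add_of_le_of_lt (by simp [ENNReal.mul_eq_top, hJ]) hout hin
    _ = J := by rw [add_comm, lintegral_add_compl _ hS]; rfl
  exact lt_irrefl J this

theorem IsInteractionMinimiserOn.exists_sub_notMem [IsTopologicalAddGroup E] [BorelSpace E]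
    [HereditarilyLindelofSpace E] (hg : Measurable g) (hsym : ∀ z, g (-z) = g z)
    (hρ : IsInteractionMinimiserOn g F ρ) (hJ : interaction g ρ ≠ ⊤) {S₁ S₂ : Set E}
    (hS₁ : IsClosed S₁) (hS₂ : IsClosed S₂) (hdisj : Disjoint S₁ S₂)
    (hcover : ρ.support ⊆ S₁ ∪ S₂) (h₁ : ρ S₁ ≠ 0) (h₂ : ρ S₂ ≠ 0) {e : E}
    (hdec : ∀ x ∈ S₂, ∀ y ∈ S₁, g (x - e - y) < g (x - y)) :
    ∃ x ∈ ρ.support ∩ S₂, x - e ∉ F := by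
  have := hρ.1
  by_contra! hF
  have hnull : ρ (S₁ ∪ S₂)ᶜ = 0 :=
    measure_mono_null (compl_subset_compl.2 hcover) Measure.measure_compl_support
  have hprob : IsProbabilityMeasure (ρ.restrict S₁ + (ρ.restrict S₂).map (· - e)) := by
    constructor
    rw [Measure.add_apply, Measure.map_apply (measurable_sub_const e) MeasurableSet.univ,
      preimage_univ, Measure.restrict_apply_univ, Measure.restrict_apply_univ,
      ← measure_union hdisj hS₂.measurableSet, ← prob_compl_eq_zero_iff
        (hS₁.measurableSet.union hS₂.measurableSet)]
    exact hnull
  have hsupp : (ρ.restrict S₁ + (ρ.restrict S₂).map (· - e)).support ⊆ F := by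
    rw [Measure.support_add]
    refine union_subset ((Measure.support_mono Measure.restrict_le_self).trans hρ.2.1)
      ((Measure.support_map_homeomorph_subset _ (Homeomorph.subRight e)).trans ?_)
    rintro _ ⟨x, hx, rfl⟩
    have hx' := Measure.support_restrict_subset hx
    rw [hS₂.closure_eq] at hx'
    exact hF x ⟨hx'.2, hx'.1⟩
  exact (hρ.2.2 _ hprob hsupp).not_gt (interaction_restrict_add_map_sub_lt hg hsym
    hS₁.measurableSet hS₂.measurableSet hdisj hnull h₁ h₂ hJ hdec)

end Minimiser

section Metric

variable {E : Type*} [SeminormedAddCommGroup E] [MeasurableSpace E] [OpensMeasurableSpace E]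
  [MeasurableSub₂ E] {g : E → ℝ≥0∞} {F : Set E} {ρ : Measure E}

/-- Near `x₀` there is a point where the potential is at most `J`; since the kernel is at least `c`
beyond distance `A`, the mass farther than `A` from that point is at most `J / c`. -/
theorem IsInteractionMinimiserOn.one_sub_div_le_measure_ball (hg : Measurable g)
    (hsym : ∀ z, g (-z) = g z) (hρ : IsInteractionMinimiserOn g F ρ)
    (hJ : interaction g ρ ≠ ⊤) {c : ℝ≥0∞} (hc : c ≠ 0) {A : ℝ}
    (hfar : ∀ z, A ≤ ‖z‖ → c ≤ g z) {x₀ : E} (hx₀ : x₀ ∈ ρ.support) {r : ℝ} (hr : A < r) :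
    1 - interaction g ρ / c ≤ ρ (ball x₀ r) := by
  have := hρ.1
  have hpos : ρ (ball x₀ (r - A)) ≠ 0 :=
    ((Measure.mem_support_iff_forall x₀).1 hx₀ _ (ball_mem_nhds x₀ (by linarith))).ne'
  obtain ⟨x, hx, hψ⟩ := Measure.exists_mem_of_measure_ne_zero_of_ae hpos
    (ae_restrict_of_ae (hρ.ae_potential_le hg hsym hJ))
  have hfar_mass : ρ (ball x A)ᶜ * c ≤ interaction g ρ := calc
    ρ (ball x A)ᶜ * c = ∫⁻ _ in (ball x A)ᶜ, c ∂ρ := by rw [setLIntegral_const, mul_comm]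
    _ ≤ ∫⁻ y in (ball x A)ᶜ, g (x - y) ∂ρ :=
      setLIntegral_mono (hg.comp (measurable_const.sub measurable_id)) fun y hy =>
        hfar _ (by simpa [dist_eq_norm'] using hy)
    _ ≤ potential g ρ x := setLIntegral_le_lintegral _ _
    _ ≤ interaction g ρ := hψ
  calc 1 - interaction g ρ / c ≤ 1 - ρ (ball x A)ᶜ :=
        tsub_le_tsub_left ((ENNReal.le_div_iff_mul_le (Or.inl hc) (Or.inr hJ)).2 hfar_mass) 1
    _ = ρ (ball x A) := by rw [prob_compl_eq_one_sub measurableSet_ball, ENNReal.sub_sub_cancel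
        ENNReal.one_ne_top prob_le_one]
    _ ≤ ρ (ball x₀ r) := measure_mono (ball_subset_ball' (by rw [mem_ball] at hx; linarith))

end Metric

theorem natCast_mul_le_one_of_pairwise_le_dist {α : Type*} [PseudoMetricSpace α]
    [MeasurableSpace α] [OpensMeasurableSpace α] (μ : Measure α) [IsProbabilityMeasure μ]
    {n : ℕ} (p : Fin n → α) {r : ℝ} (hp : Pairwise fun i j => 2 * r ≤ dist (p i) (p j))
    {m : ℝ≥0∞} (hm : ∀ i, m ≤ μ (ball (p i) r)) : n * m ≤ 1 := calc
  (n : ℝ≥0∞) * m = ∑ _ : Fin n, m := by simp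
  _ ≤ ∑ i, μ (ball (p i) r) := Finset.sum_le_sum fun i _ => hm i
  _ = μ (⋃ i, ball (p i) r) := by
    rw [measure_iUnion (fun i j hij => ball_disjoint_ball (by linarith [hp hij]))
      (fun _ => measurableSet_ball), tsum_fintype]
  _ ≤ 1 := prob_le_one

/-- The windows tested are `[t₀ + (2i+1)G, t₀ + (2i+2)G]` for `i < n`. -/
theorem exists_gap_or_exists_separated {α : Type*} (f : α → ℝ) (S : Set α) {t₀ t₁ G : ℝ}
    (hG : 0 < G) {n : ℕ} (h : t₀ + 2 * n * G < t₁) :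
    (∃ a, t₀ < a ∧ a + G < t₁ ∧ ∀ z ∈ S, f z ∉ Icc a (a + G)) ∨
      ∃ p : Fin n → α, (∀ i, p i ∈ S) ∧ Pairwise fun i j => G ≤ |f (p i) - f (p j)| := by
  by_cases hall : ∀ i : Fin n, ∃ z ∈ S,
      f z ∈ Icc (t₀ + (2 * (i : ℕ) + 1) * G) (t₀ + (2 * (i : ℕ) + 2) * G)
  · choose p hpS hpI using hall
    refine Or.inr ⟨p, hpS, ?_⟩
    have hlt : ∀ i j : Fin n, i < j → G ≤ f (p j) - f (p i) := by
      intro i j hij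
      have : ((i : ℕ) : ℝ) + 1 ≤ (j : ℕ) := by exact_mod_cast hij
      nlinarith [(hpI i).2, (hpI j).1]
    intro i j hij
    rcases hij.lt_or_gt with hij | hij
    · rw [abs_sub_comm]; exact (hlt i j hij).trans (le_abs_self _)
    · exact (hlt j i hij).trans (le_abs_self _)
  · push Not at hall
    obtain ⟨i, hi⟩ := hall
    have : ((i : ℕ) : ℝ) + 1 ≤ n := by exact_mod_cast i.2
    refine Or.inl ⟨t₀ + (2 * (i : ℕ) + 1) * G, by nlinarith, by nlinarith, fun z hz => ?_⟩
    convert hi z hz using 3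
    ring

theorem exists_le_of_tendsto_cocompact {E β : Type*} [NormedAddCommGroup E] [ProperSpace E]
    [LinearOrder β] [TopologicalSpace β] [OrderTopology β] {f : E → β} {L c : β}
    (hf : Tendsto f (cocompact E) (𝓝 L)) (hc : c < L) :
    ∃ A, ∀ z, A ≤ ‖z‖ → c ≤ f z := by
  have h := hf.eventually (eventually_gt_nhds hc)
  rw [← Metric.cobounded_eq_cocompact, ← comap_norm_atTop, eventually_comap,
    eventually_atTop] at h
  obtain ⟨A, hA⟩ := h
  exact ⟨A, fun z hz => (hA _ hz z rfl).le⟩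

theorem exists_support_subset_closedBall_interaction_lt {E : Type*} [NormedAddCommGroup E]
    [MeasurableSpace E] [OpensMeasurableSpace E] [MeasurableSub₂ E] {g : E → ℝ≥0∞}
    (hg : Measurable g) {ρ₀ : Measure E} [IsProbabilityMeasure ρ₀] {c : ℝ≥0∞}
    (hc : interaction g ρ₀ < c) :
    ∃ m : ℝ, ∃ ν : Measure E, IsProbabilityMeasure ν ∧ ν.support ⊆ closedBall 0 m ∧
      interaction g ν < c := by
  have hβ : Tendsto (fun m : ℕ => ρ₀ (closedBall 0 m)) atTop (𝓝 1) := by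
    have := tendsto_measure_iUnion_atTop (μ := ρ₀)
      (fun a b hab => closedBall_subset_closedBall (x := (0 : E)) (Nat.cast_le.2 hab))
    rwa [iUnion_closedBall_nat, measure_univ] at this
  have hlim : Tendsto (fun m : ℕ => (ρ₀ (closedBall 0 m))⁻¹ ^ 2 * interaction g ρ₀) atTop
      (𝓝 (interaction g ρ₀)) := by
    have := ENNReal.Tendsto.mul_const (((ENNReal.continuous_pow 2).tendsto _).comp
      (tendsto_inv_iff.2 hβ)) (Or.inr (ne_top_of_lt hc))
    rwa [inv_one, one_pow, one_mul] at this
  obtain ⟨m, hm0, hmc⟩ := ((hβ.eventually_ne one_ne_zero).and (hlim.eventually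
    (gt_mem_nhds hc))).exists
  refine ⟨m, ρ₀[|closedBall 0 m], cond_isProbabilityMeasure hm0, ?_, ?_⟩
  · refine (Measure.smul_absolutelyContinuous.support_mono.trans
      Measure.support_restrict_subset).trans ?_
    rw [isClosed_closedBall.closure_eq]
    exact inter_subset_left
  · rw [ProbabilityTheory.cond, interaction_smul hg]
    refine lt_of_le_of_lt ?_ hmc
    gcongr
    exact interaction_mono Measure.restrict_le_self

lemma EuclideanSpace.abs_sub_apply_le_dist {ι : Type*} [Fintype ι] (x y : EuclideanSpace ℝ ι)
    (k : ι) : |x k - y k| ≤ dist x y := by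
  simpa [dist_eq_norm] using PiLp.norm_apply_le (x - y) k

lemma EuclideanSpace.dist_le_sqrt_card_mul {ι : Type*} [Fintype ι] {x y : EuclideanSpace ℝ ι}
    {L : ℝ} (hL : 0 ≤ L) (h : ∀ k, |x k - y k| ≤ L) : dist x y ≤ √(Fintype.card ι) * L := by
  rw [EuclideanSpace.dist_eq, ← Real.sqrt_sq hL, ← Real.sqrt_mul (Nat.cast_nonneg _)]
  refine Real.sqrt_le_sqrt ?_
  calc ∑ k, dist (x k) (y k) ^ 2 ≤ ∑ _k : ι, L ^ 2 := Finset.sum_le_sum fun k _ =>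
        pow_le_pow_left₀ dist_nonneg (by rw [Real.dist_eq]; exact h k) 2
    _ = Fintype.card ι * L ^ 2 := by simp

lemma norm_sub_le_norm_of_sq_le_two_inner {F : Type*} [NormedAddCommGroup F]
    [InnerProductSpace ℝ F] {x v : F} (h : ‖v‖ ^ 2 ≤ 2 * inner ℝ x v) : ‖x - v‖ ≤ ‖x‖ := by
  rw [← sq_le_sq₀ (norm_nonneg _) (norm_nonneg _), norm_sub_sq_real]
  linarith

/-- Hypothesis (H6). -/
def CoordStrictMonoBeyond {d : ℕ} {β : Type*} [Preorder β] (R₀ : ℝ) (f : Ed d → β) : Prop :=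
  ∀ (k : Fin d) (x y : Ed d), (∀ j, j ≠ k → x j = y j) → R₀ ≤ x k → x k < y k → f x < f y

lemma CoordStrictMonoBeyond.sub_single_lt {d : ℕ} {β : Type*} [Preorder β] {R₀ : ℝ}
    {f : Ed d → β} (hf : CoordStrictMonoBeyond R₀ f) {k : Fin d} {w : Ed d} (hw : R₀ + 1 ≤ w k) :
    f (w - EuclideanSpace.single k 1) < f w :=
  hf k _ _ (fun j hj => by simp [hj]) (by simp; linarith) (by simp)

theorem IsInteractionMinimiserOn.exists_two_inner_lt {E : Type*} [NormedAddCommGroup E]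
    [InnerProductSpace ℝ E] [MeasurableSpace E] [BorelSpace E] [SecondCountableTopology E]
    {g : E → ℝ≥0∞} {ρ : Measure E} {R : ℝ} (hg : Measurable g) (hsym : ∀ z, g (-z) = g z)
    (hρ : IsInteractionMinimiserOn g (closedBall 0 R) ρ) (hJ : interaction g ρ ≠ ⊤)
    {S₁ S₂ : Set E} (hS₁ : IsClosed S₁) (hS₂ : IsClosed S₂) (hdisj : Disjoint S₁ S₂)
    (hcover : ρ.support ⊆ S₁ ∪ S₂) (h₁ : ρ S₁ ≠ 0) (h₂ : ρ S₂ ≠ 0) {e : E}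
    (hdec : ∀ x ∈ S₂, ∀ y ∈ S₁, g (x - e - y) < g (x - y)) :
    ∃ x ∈ ρ.support ∩ S₂, 2 * inner ℝ x e < ‖e‖ ^ 2 := by
  obtain ⟨x, hx, hxR⟩ := hρ.exists_sub_notMem hg hsym hJ hS₁ hS₂ hdisj hcover h₁ h₂ hdec
  refine ⟨x, hx, lt_of_not_ge fun h => hxR (mem_closedBall_zero_iff.2 ?_)⟩
  exact (norm_sub_le_norm_of_sq_le_two_inner h).trans (mem_closedBall_zero_iff.1 (hρ.2.1 hx.1))

section Coordinates

variable {d : ℕ} {g : Ed d → ℝ≥0∞} {ρ : Measure (Ed d)} {R R₀ : ℝ}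

/-- Otherwise the part of the support on the side of the gap away from the origin can be moved one
unit towards the other part: it stays in the ball, and every interaction across the gap strictly
decreases. -/
theorem IsInteractionMinimiserOn.exists_apply_mem_Icc (hg : Measurable g)
    (hsym : ∀ z, g (-z) = g z) (hmono : CoordStrictMonoBeyond R₀ g)
    (hρ : IsInteractionMinimiserOn g (closedBall 0 R) ρ) (hJ : interaction g ρ ≠ ⊤)
    {x y : Ed d} (hx : x ∈ ρ.support) (hy : y ∈ ρ.support) {k : Fin d} {a G : ℝ}
    (hxa : x k < a) (hay : a + G < y k) (hG₀ : R₀ + 1 ≤ G) (hG : 1 ≤ G) :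
    ∃ z ∈ ρ.support, z k ∈ Icc a (a + G) := by
  by_contra! hgap
  have hcont : Continuous fun z : Ed d => z k := by fun_prop
  set S₁ := {z : Ed d | z k ≤ a}
  set S₂ := {z : Ed d | a + G ≤ z k}
  have hS₁ : IsClosed S₁ := isClosed_le hcont continuous_const
  have hS₂ : IsClosed S₂ := isClosed_le continuous_const hcont
  have hdisj : Disjoint S₁ S₂ :=
    disjoint_left.2 fun z (h₁ : z k ≤ a) (h₂ : a + G ≤ z k) => by linarith
  have hcover : ρ.support ⊆ S₁ ∪ S₂ := fun z hz => by
    have := hgap z hz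
    simp only [mem_Icc, not_and_or, not_le] at this
    exact this.imp le_of_lt le_of_lt
  have h₁ : ρ S₁ ≠ 0 := ((Measure.mem_support_iff_forall x).1 hx S₁ (mem_of_superset
    ((isOpen_lt hcont continuous_const).mem_nhds hxa) fun z (hz : z k < a) => hz.le)).ne'
  have h₂ : ρ S₂ ≠ 0 := ((Measure.mem_support_iff_forall y).1 hy S₂ (mem_of_superset
    ((isOpen_lt continuous_const hcont).mem_nhds hay) fun z (hz : a + G < z k) => hz.le)).ne'
  have hstep : ∀ u ∈ S₂, ∀ v ∈ S₁, g (u - v - EuclideanSpace.single k 1) < g (u - v) :=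
    fun u (hu : a + G ≤ u k) v (hv : v k ≤ a) => hmono.sub_single_lt (by simp; linarith)
  rcases le_or_gt (1 / 2) (a + G) with hpos | hneg
  · obtain ⟨z, ⟨-, hz : a + G ≤ z k⟩, hlt⟩ := hρ.exists_two_inner_lt hg hsym hJ hS₁ hS₂ hdisj
      hcover h₁ h₂ (e := EuclideanSpace.single k 1)
      fun u hu v hv => by rw [sub_right_comm]; exact hstep u hu v hv
    simp [EuclideanSpace.inner_single_right] at hlt
    linarith
  · obtain ⟨z, ⟨-, hz : z k ≤ a⟩, hlt⟩ := hρ.exists_two_inner_lt hg hsym hJ hS₂ hS₁ hdisj.symm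
      (union_comm S₁ S₂ ▸ hcover) h₂ h₁ (e := -EuclideanSpace.single k 1)
      fun u hu v hv => by
        rw [← hsym (u - v), neg_sub, ← hsym, neg_sub, sub_neg_eq_add, sub_add_eq_sub_sub_swap,
          sub_right_comm]
        exact hstep v hv u hu
    simp [EuclideanSpace.inner_single_right] at hlt
    linarith

end Coordinates

section Spread

variable {d : ℕ} {g : Ed d → ℝ≥0∞} {ρ : Measure (Ed d)} {R R₀ A G : ℝ} {c : ℝ≥0∞} {n : ℕ}

/-- Otherwise either a window of width `G` between the two coordinates misses the support, which
`exists_apply_mem_Icc` excludes, or `n` windows hold `G`-separated support points, each carrying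
more than `1 / n` of the mass within distance `G / 2`. -/
theorem IsInteractionMinimiserOn.apply_sub_apply_le (hg : Measurable g)
    (hsym : ∀ z, g (-z) = g z) (hmono : CoordStrictMonoBeyond R₀ g)
    (hρ : IsInteractionMinimiserOn g (closedBall 0 R) ρ) (hJ : interaction g ρ ≠ ⊤)
    (hc : c ≠ 0) (hfar : ∀ z, A ≤ ‖z‖ → c ≤ g z) (hn : 1 < n * (1 - interaction g ρ / c))
    (hAG : 2 * A < G) (hG₀ : R₀ + 1 ≤ G) (hG : 1 ≤ G) {x y : Ed d} (hx : x ∈ ρ.support)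
    (hy : y ∈ ρ.support) (k : Fin d) : y k - x k ≤ 2 * n * G := by
  by_contra! h
  rcases exists_gap_or_exists_separated (fun z : Ed d => z k) ρ.support (by linarith : (0 : ℝ) < G)
    (by linarith : x k + 2 * n * G < y k) with ⟨a, hxa, hay, hgap⟩ | ⟨p, hp, hsep⟩
  · obtain ⟨z, hz, hzI⟩ := hρ.exists_apply_mem_Icc hg hsym hmono hJ hx hy hxa hay hG₀ hG
    exact hgap z hz hzI
  · have := hρ.1
    refine (natCast_mul_le_one_of_pairwise_le_dist ρ p (r := G / 2) (fun i j hij => ?_)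
      fun i => hρ.one_sub_div_le_measure_ball hg hsym hJ hc hfar (hp i) (by linarith)).not_gt hn
    linarith [hsep hij, EuclideanSpace.abs_sub_apply_le_dist (p i) (p j) k]

theorem IsInteractionMinimiserOn.dist_le (hg : Measurable g)
    (hsym : ∀ z, g (-z) = g z) (hmono : CoordStrictMonoBeyond R₀ g)
    (hρ : IsInteractionMinimiserOn g (closedBall 0 R) ρ) (hJ : interaction g ρ ≠ ⊤)
    (hc : c ≠ 0) (hfar : ∀ z, A ≤ ‖z‖ → c ≤ g z) (hn : 1 < n * (1 - interaction g ρ / c))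
    (hAG : 2 * A < G) (hG₀ : R₀ + 1 ≤ G) (hG : 1 ≤ G) {x y : Ed d} (hx : x ∈ ρ.support)
    (hy : y ∈ ρ.support) : dist x y ≤ √d * (2 * n * G) := by
  simpa using EuclideanSpace.dist_le_sqrt_card_mul (by positivity) fun k => abs_sub_le_iff.2
    ⟨hρ.apply_sub_apply_le hg hsym hmono hJ hc hfar hn hAG hG₀ hG hy hx k,
      hρ.apply_sub_apply_le hg hsym hmono hJ hc hfar hn hAG hG₀ hG hx hy k⟩

/-- Small balls need no argument; on large balls the truncation `ν` of `ρ₀` is a competitor, so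
the minimiser's energy stays below the level `c` that the kernel exceeds at distance `A`. -/
theorem exists_ediam_support_le (hg : Measurable g) (hsym : ∀ z, g (-z) = g z)
    (hmono : CoordStrictMonoBeyond R₀ g) {ρ₀ : Measure (Ed d)} [IsProbabilityMeasure ρ₀]
    (hc : interaction g ρ₀ < c) (hfar : ∀ z, A ≤ ‖z‖ → c ≤ g z) :
    ∃ K, 0 < K ∧ ∀ R ρ, IsInteractionMinimiserOn g (closedBall 0 R) ρ →
      Metric.ediam ρ.support ≤ ENNReal.ofReal K := by
  obtain ⟨m, ν, hν, hνm, hνc⟩ := exists_support_subset_closedBall_interaction_lt hg hc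
  have hc0 : c ≠ 0 := (pos_of_gt hνc).ne'
  have hνJ : interaction g ν ≠ ⊤ := ne_top_of_lt hνc
  obtain ⟨n, hn⟩ : ∃ n : ℕ, 1 < n * (1 - interaction g ν / c) :=
    ENNReal.exists_nat_mul_gt (tsub_pos_of_lt ((ENNReal.div_lt_iff (Or.inl hc0)
      (Or.inr hνJ)).2 (by simpa using hνc))).ne' ENNReal.one_ne_top
  obtain ⟨G, hAG, hG₀, hG⟩ : ∃ G : ℝ, 2 * A < G ∧ R₀ + 1 ≤ G ∧ 1 ≤ G :=
    ⟨2 * |A| + |R₀| + 1, by linarith [le_abs_self A, abs_nonneg R₀],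
      by linarith [abs_nonneg A, le_abs_self R₀], by linarith [abs_nonneg A, abs_nonneg R₀]⟩
  have hK := le_max_right (2 * m) (√d * (2 * n * G))
  have hK' := le_max_left (2 * m) (√d * (2 * n * G))
  refine ⟨max (2 * m) (√d * (2 * n * G)) + 1, by positivity, fun R ρ hρ => ?_⟩
  refine Metric.ediam_le_of_forall_dist_le fun x hx y hy => ?_
  rcases le_or_gt R m with hR | hR
  · have hxR := mem_closedBall_zero_iff.1 (hρ.2.1 hx)
    have hyR := mem_closedBall_zero_iff.1 (hρ.2.1 hy)
    linarith [dist_le_norm_add_norm x y]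
  · have hJ : interaction g ρ ≤ interaction g ν :=
      hρ.2.2 ν hν (hνm.trans (closedBall_subset_closedBall hR.le))
    have hn' : 1 < n * (1 - interaction g ρ / c) := hn.trans_le (by gcongr)
    linarith [hρ.dist_le hg hsym hmono (ne_top_of_le_ne_top hνJ hJ) hc0 hfar hn' hAG hG₀ hG hx hy]

end Spread

lemma EReal.posPart_eq_toENNReal (x : EReal) : x.posPart = x.toENNReal := by
  rcases le_total x 0 with h | h
  · simp [EReal.posPart, h]
  · rw [EReal.posPart, sup_of_le_left h]
    induction x with
    | bot => simp at h
    | coe r => simp [EReal.abs_def, abs_of_nonneg (EReal.coe_nonneg.1 h)]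
    | top => simp

lemma EReal.toENNReal_add_ofReal_neg {y : EReal} {c : ℝ} (hc : c ≤ 0) (hy : (c : EReal) ≤ y) :
    y.toENNReal + ENNReal.ofReal (-c) = (y - c).toENNReal + (-y).toENNReal := by
  induction y with
  | bot => simp at hy
  | top => simp
  | coe r =>
    have hcr : c ≤ r := by exact_mod_cast hy
    rw [← EReal.coe_sub, ← EReal.coe_neg]
    simp only [EReal.real_coe_toENNReal]
    rcases le_total 0 r with h | h
    · rw [ENNReal.ofReal_of_nonpos (neg_nonpos.2 h), add_zero,
        ← ENNReal.ofReal_add h (neg_nonneg.2 hc), sub_eq_add_neg]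
    · rw [ENNReal.ofReal_of_nonpos h, zero_add, ← ENNReal.ofReal_add (by linarith)
        (neg_nonneg.2 h)]
      ring_nf

lemma eInt_eq_lintegral_toENNReal_sub_add {α : Type*} [MeasurableSpace α] (P : Measure α)
    [IsProbabilityMeasure P] {f : α → EReal} (hf : Measurable f) {c : ℝ} (hc : c ≤ 0)
    (hfc : ∀ x, (c : EReal) ≤ f x) :
    eInt P f = ((∫⁻ x, (f x - c).toENNReal ∂P : ℝ≥0∞) : EReal) + c := by
  simp only [eInt, EReal.posPart_eq_toENNReal]
  set A := ∫⁻ x, (f x - c).toENNReal ∂P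
  set B := ∫⁻ x, (f x).toENNReal ∂P
  set N := ∫⁻ x, (-f x).toENNReal ∂P
  have hmeas : Measurable fun x => (-f x).toENNReal :=
    EReal.continuous_toENNReal.measurable.comp (continuous_neg.measurable.comp hf)
  have key : B + ENNReal.ofReal (-c) = A + N := calc
    B + ENNReal.ofReal (-c) = ∫⁻ x, ((f x).toENNReal + ENNReal.ofReal (-c)) ∂P := by
      rw [lintegral_add_right _ measurable_const, lintegral_const, measure_univ, mul_one]
    _ = ∫⁻ x, ((f x - c).toENNReal + (-f x).toENNReal) ∂P :=
      lintegral_congr fun x => EReal.toENNReal_add_ofReal_neg hc (hfc x)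
    _ = A + N := lintegral_add_right _ hmeas
  have hN : N ≤ ENNReal.ofReal (-c) := by
    calc N ≤ ∫⁻ _, ENNReal.ofReal (-c) ∂P := lintegral_mono fun x =>
          EReal.toENNReal_le_toENNReal (EReal.neg_le_neg_iff.2 (hfc x))
      _ = ENNReal.ofReal (-c) := by simp
  have hN_coe : ((N.toReal : ℝ) : EReal) = N :=
    EReal.coe_ennreal_toReal (ne_top_of_le_ne_top ENNReal.ofReal_ne_top hN)
  have key' : (B : EReal) + ((-c : ℝ) : EReal) = A + (N.toReal : ℝ) := by
    have := congrArg ((↑) : ℝ≥0∞ → EReal) key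
    rwa [EReal.coe_ennreal_add, EReal.coe_ennreal_add, EReal.coe_ennreal_ofReal,
      max_eq_left (by linarith), ← hN_coe] at this
  rw [← hN_coe, ← EReal.add_sub_cancel_right (a := (B : EReal)) (b := -c), key',
    sub_eq_add_neg _ ((-c : ℝ) : EReal), ← EReal.coe_neg, neg_neg, add_right_comm,
    EReal.add_sub_cancel_right]

lemma EReal.strictMono_coe_mul {r : ℝ} (hr : 0 < r) : StrictMono fun x : EReal => (r : EReal) * x :=
  strictMono_of_le_iff_le fun x y => by
    refine ⟨fun h => mul_le_mul_of_nonneg_left h (EReal.coe_nonneg.2 hr.le), fun h => ?_⟩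
    simpa [← mul_assoc, ← EReal.coe_mul, inv_mul_cancel₀ hr.ne'] using
      mul_le_mul_of_nonneg_left h (EReal.coe_nonneg.2 (inv_nonneg.2 hr.le))

noncomputable def shiftedKernel {X : Type*} (W : X → EReal) (c : ℝ) (z : X) : ℝ≥0∞ :=
  (W z - c).toENNReal

section Energy

variable {d : ℕ} {W : Ed d → EReal} {Wmin : ℝ}

lemma measurable_shiftedKernel (hW : Measurable W) (c : ℝ) : Measurable (shiftedKernel W c) :=
  (Monotone.measurable fun _ _ h => EReal.toENNReal_le_toENNReal (EReal.sub_le_sub h le_rfl)).comp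
    hW

lemma energy_eq_half_mul_interaction_add (hW : Measurable W) (hWmin : Wmin ≤ 0)
    (hbound : ∀ x, (Wmin : EReal) ≤ W x) (μ : Measure (Ed d)) [IsProbabilityMeasure μ] :
    energy W μ = ((1 / 2 : ℝ) : EReal) * (interaction (shiftedKernel W Wmin) μ + Wmin) := by
  rw [energy, eInt_eq_lintegral_toENNReal_sub_add _ (f := fun p : Ed d × Ed d => W (p.1 - p.2))
    (hW.comp (measurable_fst.sub measurable_snd)) hWmin fun _ => hbound _]
  congr 3
  exact lintegral_prod _ (measurable_shiftedKernel hW Wmin).comp_fst_sub_snd.aemeasurable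

lemma strictMono_half_mul_coe_add (c : ℝ) :
    StrictMono fun J : ℝ≥0∞ => ((1 / 2 : ℝ) : EReal) * ((J : EReal) + c) :=
  (EReal.strictMono_coe_mul one_half_pos).comp
    fun _ _ h => EReal.add_lt_add_right_coe (EReal.coe_ennreal_strictMono h) c

theorem IsMinimiserOn.isInteractionMinimiserOn (hW : Measurable W) (hWmin : Wmin ≤ 0)
    (hbound : ∀ x, (Wmin : EReal) ≤ W x) {ρ : Measure (Ed d)} {R : ℝ} (hρ : IsMinimiserOn W ρ R) :
    IsInteractionMinimiserOn (shiftedKernel W Wmin) (closedBall 0 R) ρ := by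
  obtain ⟨hprob, hball, hmin⟩ := hρ
  refine ⟨hprob, msupport_eq_support ρ ▸ hball, fun μ hμ hμR => ?_⟩
  have := hmin μ hμ (by rwa [InBall, msupport_eq_support])
  rwa [energy_eq_half_mul_interaction_add hW hWmin hbound,
    energy_eq_half_mul_interaction_add hW hWmin hbound,
    (strictMono_half_mul_coe_add Wmin).le_iff_le] at this

lemma CoordStrictMonoBeyond.shiftedKernel {R₀ : ℝ} (hW : CoordStrictMonoBeyond R₀ W)
    (hbound : ∀ x, (Wmin : EReal) ≤ W x) : CoordStrictMonoBeyond R₀ (shiftedKernel W Wmin) :=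
  fun k x y hxy hx hlt => EReal.toENNReal_lt_toENNReal
    ((EReal.sub_nonneg (Or.inr (EReal.coe_ne_top _)) (Or.inr (EReal.coe_ne_bot _))).2 (hbound x))
    (EReal.sub_lt_sub_of_lt_of_le (hW k x y hxy hx hlt) le_rfl (EReal.coe_ne_bot _)
      (EReal.coe_ne_top _))

theorem exists_interaction_lt_le_shiftedKernel {Winf : EReal}
    (hlim : Tendsto W (cocompact (Ed d)) (𝓝 Winf)) {J₀ : ℝ≥0∞}
    (hJ₀ : (J₀ : EReal) + Wmin < Winf) :
    ∃ c : ℝ≥0∞, J₀ < c ∧ ∃ A, ∀ z, A ≤ ‖z‖ → c ≤ shiftedKernel W Wmin z := by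
  obtain ⟨c, hJc, hcW⟩ := EReal.lt_iff_exists_real_btwn.1 hJ₀
  obtain ⟨A, hA⟩ := exists_le_of_tendsto_cocompact hlim hcW
  refine ⟨ENNReal.ofReal (c - Wmin), ?_, A, fun z hz => ?_⟩
  · have hpos : 0 ≤ c - Wmin := by
      have := (EReal.coe_ennreal_nonneg J₀).trans_lt ((EReal.lt_sub_iff_add_lt
        (Or.inl (EReal.coe_ne_bot _)) (Or.inl (EReal.coe_ne_top _))).2 hJc)
      exact_mod_cast this.le
    rw [← EReal.coe_ennreal_lt_coe_ennreal_iff, EReal.coe_ennreal_ofReal, max_eq_left hpos,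
      EReal.coe_sub, EReal.lt_sub_iff_add_lt (Or.inl (EReal.coe_ne_bot _))
        (Or.inl (EReal.coe_ne_top _))]
    exact hJc
  · rw [shiftedKernel, ← EReal.real_coe_toENNReal, EReal.coe_sub]
    exact EReal.toENNReal_le_toENNReal (EReal.sub_le_sub (hA z hz) le_rfl)

end Energy

theorem uniform_support_diameter_bound_general
    {d : ℕ} (W : Ed d → EReal) (hWmeas : Measurable W)
    (Wmin : ℝ) (hWmin : Wmin < 0) (hbound : ∀ x, (Wmin : EReal) ≤ W x)
    (hsym : ∀ x, W (-x) = W x)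
    (Winf : EReal) (hlim : Tendsto W (cocompact (Ed d)) (nhds Winf))
    (hunst : ∃ ρ : Measure (Ed d), IsProbabilityMeasure ρ ∧
      energy W ρ < ((1 / 2 : ℝ) : EReal) * Winf)
    (R₆ : ℝ)
    (hgrow : ∀ (k : Fin d) (x y : Ed d), (∀ j, j ≠ k → x j = y j) →
      R₆ ≤ x k → x k < y k → W x < W y) :
    ∃ K : ℝ, 0 < K ∧ ∀ R : ℝ, 0 ≤ R → ∀ ρR : Measure (Ed d), IsMinimiserOn W ρR R →
      EMetric.diam (msupport ρR) ≤ ENNReal.ofReal K := by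
  obtain ⟨ρ₀, hρ₀, hE⟩ := hunst
  have hJ₀ : (interaction (shiftedKernel W Wmin) ρ₀ : EReal) + Wmin < Winf := by
    rw [energy_eq_half_mul_interaction_add hWmeas hWmin.le hbound] at hE
    exact (EReal.strictMono_coe_mul one_half_pos).lt_iff_lt.1 hE
  obtain ⟨c, hc, A, hfar⟩ := exists_interaction_lt_le_shiftedKernel hlim hJ₀
  obtain ⟨K, hK, hdiam⟩ := exists_ediam_support_le (measurable_shiftedKernel hWmeas Wmin)
    (fun z => by simp only [shiftedKernel, hsym])
    (CoordStrictMonoBeyond.shiftedKernel (R₀ := R₆) hgrow hbound) hc hfar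
  refine ⟨K, hK, fun R _ ρ hρ => ?_⟩
  rw [msupport_eq_support]
  exact hdiam R ρ (hρ.isInteractionMinimiserOn hWmeas hWmin.le hbound)

/-- **Lemma (uniform bound on the support of minimisers).** Under Hypotheses (H1)–(H6)
there exists `K > 0`, depending only on `W` and `d`, such that for every `R ≥ 0` and every
global minimiser `ρR` of the energy on `P_R(ℝ^d)`, the diameter of the support of `ρR` is
at most `K`. -/
theorem uniform_support_diameter_bound
    {d : ℕ} (hd : 1 ≤ d) (W : Ed d → EReal) (hWmeas : Measurable W)
    (Wmin : ℝ) (hWmin : Wmin < 0) (hbound : ∀ x, (Wmin : EReal) ≤ W x)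
    (hloc : ∀ (x : Ed d) (r : ℝ), 0 < r →
      ∫⁻ y in Metric.ball x r, (W y).abs ∂volume < ⊤)
    (hsym : ∀ x, W (-x) = W x)
    (Winf : EReal) (hlim : Tendsto W (cocompact (Ed d)) (nhds Winf))
    (hunst : ∃ ρ : Measure (Ed d), IsProbabilityMeasure ρ ∧
      energy W ρ < ((1 / 2 : ℝ) : EReal) * Winf)
    (hlsc : LowerSemicontinuous W)
    (R₆ : ℝ) (hR₆ : 0 < R₆)
    (hgrow : ∀ (k : Fin d) (x y : Ed d), (∀ j, j ≠ k → x j = y j) →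
      R₆ ≤ x k → x k < y k → W x < W y) :
    ∃ K : ℝ, 0 < K ∧ ∀ R : ℝ, 0 ≤ R → ∀ ρR : Measure (Ed d), IsMinimiserOn W ρR R →
      EMetric.diam (msupport ρR) ≤ ENNReal.ofReal K :=
  uniform_support_diameter_bound_general W hWmeas Wmin hWmin hbound hsym Winf hlim hunst R₆ hgrow
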